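/- arXiv:1502.04458 — 3 statements merged into one kernel-verified Lean document; each statement's English description precedes it below -/
import Mathlib

section
/- Let n ≥ 5 be even, let M be a perfect matching in the complete graph K_n, and let G = K_n \ M. Then γ₃(G) = 4. -/
/-!
In `K_n \ M` every vertex misses exactly one other vertex, its partner. Hence any four vertices
3-dominate. Conversely, a 3-dominating set `T` of size at most three that misses some vertex has
exactly three elements and is closed under the matching (the partner of `u ∈ T` sees at most
`T \ {u}`), so the matching restricts to a perfect matching of `T`, contradicting `|T| = 3`.
-/

/-- `S` is a 3-dominating set of `G`: every vertex outside `S`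
has at least three neighbors in `S`. -/
def ThreeDominating {V : Type*} (G : SimpleGraph V) (S : Finset V) : Prop :=
  ∀ v ∉ S, 3 ≤ {u | u ∈ S ∧ G.Adj v u}.ncard

/-- The 3-domination number: minimum cardinality of a 3-dominating set. -/
noncomputable def gamma3 {V : Type*} [Fintype V] (G : SimpleGraph V) : ℕ :=
  sInf {k | ∃ S : Finset V, ThreeDominating G S ∧ S.card = k}

variable {V : Type*}

lemma ThreeDominating.three_le_card {G : SimpleGraph V} {S : Finset V}
    (h : ThreeDominating G S) {v : V} (hv : v ∉ S) : 3 ≤ S.card :=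
  (h v hv).trans <| by
    rw [← Set.ncard_coe_finset S]
    exact Set.ncard_le_ncard fun u hu => hu.1

lemma SimpleGraph.Subgraph.IsPerfectMatching.even_card_of_forall_adj_mem {G : SimpleGraph V}
    {M : G.Subgraph} (hM : M.IsPerfectMatching) {T : Finset V}
    (hT : ∀ u ∈ T, ∀ w, M.Adj u w → w ∈ T) : Even T.card := by
  have hMT : (M.induce T).IsMatching := by
    rintro u (hu : u ∈ T)
    obtain ⟨w, huw, hw⟩ := hM.1 (hM.2 u)
    exact ⟨w, ⟨hu, hT u hu w huw, huw⟩, fun w' h => hw w' h.2.2⟩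
  let : Fintype (M.induce T).verts := T.fintypeCoeSort
  simpa using hMT.even_card

variable {M : (⊤ : SimpleGraph V).Subgraph}

lemma SimpleGraph.Subgraph.IsMatching.threeDominating_of_four_le_card (hM : M.IsMatching)
    {S : Finset V} (hS : 4 ≤ S.card) : ThreeDominating ((⊤ : SimpleGraph V) \ M.spanningCoe) S := by
  intro v hv
  have hpartner : (M.neighborSet v).Subsingleton := fun _ h₁ _ h₂ => hM.eq_of_adj_left h₁ h₂
  have hsub :
      ↑S \ M.neighborSet v ⊆ {u | u ∈ S ∧ ((⊤ : SimpleGraph V) \ M.spanningCoe).Adj v u} :=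
    fun u ⟨huS, hu⟩ => ⟨huS, by simpa using ⟨fun h => hv (h ▸ huS), hu⟩⟩
  calc 3 ≤ S.card - (M.neighborSet v).ncard := by
        have := (Set.ncard_le_one hpartner.finite).mpr hpartner
        omega
    _ ≤ (↑S \ M.neighborSet v).ncard := by
        simpa using Set.le_ncard_sdiff (M.neighborSet v) S hpartner.finite
    _ ≤ _ := Set.ncard_le_ncard hsub

lemma ThreeDominating.forall_adj_mem {T : Finset V}
    (h : ThreeDominating ((⊤ : SimpleGraph V) \ M.spanningCoe) T) (hT : T.card ≤ 3) :
    ∀ u ∈ T, ∀ w, M.Adj u w → w ∈ T := by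
  classical
  intro u hu w huw
  by_contra hw
  have hsub : {x | x ∈ T ∧ ((⊤ : SimpleGraph V) \ M.spanningCoe).Adj w x} ⊆ ↑(T.erase u) := by
    rintro x ⟨hxT, hwx⟩
    refine Finset.mem_erase.mpr ⟨?_, hxT⟩
    rintro rfl
    simp [huw.symm] at hwx
  have := (h w hw).trans (Set.ncard_le_ncard hsub)
  rw [Set.ncard_coe_finset, Finset.card_erase_of_mem hu] at this
  omega

lemma ThreeDominating.four_le_card (hM : M.IsPerfectMatching) {T : Finset V}
    (h : ThreeDominating ((⊤ : SimpleGraph V) \ M.spanningCoe) T) {v : V} (hv : v ∉ T) :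
    4 ≤ T.card := by
  by_contra! hT
  have hT3 : T.card = 3 := by have := h.three_le_card hv; omega
  have := hM.even_card_of_forall_adj_mem (h.forall_adj_mem (by omega))
  exact (by decide : ¬Even 3) (hT3 ▸ this)

theorem stmt_7_general (n : ℕ) (hn : 5 ≤ n)
    (M : (⊤ : SimpleGraph (Fin n)).Subgraph) (hM : M.IsPerfectMatching) :
    gamma3 ((⊤ : SimpleGraph (Fin n)) \ M.spanningCoe) = 4 := by
  obtain ⟨S, -, hS⟩ := Finset.exists_subset_card_eq (s := (Finset.univ : Finset (Fin n))) (n := 4)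
    (by simp; omega)
  refine IsLeast.csInf_eq ⟨⟨S, hM.1.threeDominating_of_four_le_card hS.ge, hS⟩, ?_⟩
  rintro _ ⟨T, hT, rfl⟩
  by_contra! hlt
  obtain ⟨v, -, hv⟩ := Finset.exists_mem_notMem_of_card_lt_card (s := T) (t := Finset.univ)
    (by rw [Finset.card_univ, Fintype.card_fin]; omega)
  exact hlt.not_ge (hT.four_le_card hM hv)

theorem stmt_7 (n : ℕ) (hn : 5 ≤ n) (hev : Even n)
    (M : (⊤ : SimpleGraph (Fin n)).Subgraph) (hM : M.IsPerfectMatching) :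
    gamma3 ((⊤ : SimpleGraph (Fin n)) \ M.spanningCoe) = 4 :=
  stmt_7_general n hn M hM
end

section
/- If n ≥ 5 is odd and M is any matching in K_n, then γ₃(K_n \ M) = 3. -/
/-!
Removing a matching `M` from `K_n` deletes at most one edge at each vertex. If `S` is a
three-element set that no edge of `M` leaves, every vertex outside `S` keeps all three of its
edges to `S`, so `S` is 3-dominating. For odd `n` the matching misses some vertex `u`, and
`S = {a, b, u}` for an edge `ab` of `M` (or any three vertices if `M` is empty) is such a set.
Conversely, a 3-dominating set that is not the whole vertex set has a vertex outside it with
three neighbours inside, so it has at least three elements.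
-/

open Finset SimpleGraph

variable {V : Type*}

lemma ThreeDominating.of_forall_adj {G : SimpleGraph V} {S : Finset V} (hS : 3 ≤ #S)
    (hadj : ∀ v ∉ S, ∀ u ∈ S, G.Adj v u) : ThreeDominating G S := by
  intro v hv
  have hnbrs : {u | u ∈ S ∧ G.Adj v u} = (S : Set V) :=
    Set.ext fun u => ⟨And.left, fun hu => ⟨hu, hadj v hv u hu⟩⟩
  rwa [hnbrs, Set.ncard_coe_finset]

lemma ThreeDominating.three_le_card_s8 [Fintype V] {G : SimpleGraph V} {S : Finset V}
    (hV : 3 ≤ Fintype.card V) (hS : ThreeDominating G S) : 3 ≤ #S := by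
  by_contra! hlt
  obtain ⟨v, -, hv⟩ := exists_mem_notMem_of_card_lt_card (s := S) (t := univ)
    (by rw [card_univ]; omega)
  refine hlt.not_ge ?_
  calc 3 ≤ {u | u ∈ S ∧ G.Adj v u}.ncard := hS v hv
    _ ≤ (S : Set V).ncard := Set.ncard_le_ncard (fun _ hu => hu.1) S.finite_toSet
    _ = #S := Set.ncard_coe_finset S

lemma gamma3_eq_three [Fintype V] {G : SimpleGraph V} {S : Finset V}
    (hV : 3 ≤ Fintype.card V) (hS : ThreeDominating G S) (hcard : #S = 3) :
    gamma3 G = 3 := by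
  refine le_antisymm (Nat.sInf_le ⟨S, hS, hcard⟩) (le_csInf ⟨3, S, hS, hcard⟩ ?_)
  rintro k ⟨T, hT, rfl⟩
  exact hT.three_le_card_s8 hV

namespace SimpleGraph.Subgraph.IsMatching

variable [Fintype V] {G : SimpleGraph V} {M : G.Subgraph}

lemma exists_notMem_verts (hM : M.IsMatching) (hodd : Odd (Fintype.card V)) :
    ∃ u, u ∉ M.verts := by
  by_contra! hall
  have hperfect : M.IsPerfectMatching := ⟨hM, hall⟩
  exact Nat.not_even_iff_odd.mpr hodd hperfect.even_card

lemma exists_card_eq_three_forall_not_adj (hM : M.IsMatching) (hodd : Odd (Fintype.card V))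
    (hV : 3 ≤ Fintype.card V) :
    ∃ S : Finset V, #S = 3 ∧ ∀ v ∉ S, ∀ w ∈ S, ¬ M.Adj v w := by
  classical
  by_cases hedge : ∃ a b, M.Adj a b
  · obtain ⟨a, b, hab⟩ := hedge
    obtain ⟨u, hu⟩ := hM.exists_notMem_verts hodd
    have hua : u ≠ a := fun h => hu (h ▸ hab.fst_mem)
    have hub : u ≠ b := fun h => hu (h ▸ hab.snd_mem)
    refine ⟨{a, b, u}, card_eq_three.mpr ⟨a, b, u, hab.ne, hua.symm, hub.symm, rfl⟩, ?_⟩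
    intro v hv w hw hvw
    simp only [mem_insert, mem_singleton, not_or] at hv hw
    rcases hw with rfl | rfl | rfl
    · exact hv.2.1 (hM.eq_of_adj_right hvw hab.symm)
    · exact hv.1 (hM.eq_of_adj_right hvw hab)
    · exact hu hvw.snd_mem
  · push Not at hedge
    obtain ⟨S, -, hS⟩ := exists_subset_card_eq (s := (univ : Finset V)) hV
    exact ⟨S, hS, fun v _ w _ => hedge v w⟩

end SimpleGraph.Subgraph.IsMatching

theorem stmt_8 (n : ℕ) (hn : 5 ≤ n) (hodd : Odd n)
    (M : (⊤ : SimpleGraph (Fin n)).Subgraph) (hM : M.IsMatching) :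
    gamma3 ((⊤ : SimpleGraph (Fin n)) \ M.spanningCoe) = 3 := by
  have hcard : 3 ≤ Fintype.card (Fin n) := by rw [Fintype.card_fin]; omega
  obtain ⟨S, hS, hclosed⟩ :=
    hM.exists_card_eq_three_forall_not_adj (by rwa [Fintype.card_fin]) hcard
  refine gamma3_eq_three hcard (ThreeDominating.of_forall_adj hS.ge ?_) hS
  intro v hv w hw
  have hvw : v ≠ w := fun h => hv (h ▸ hw)
  simpa [hvw] using hclosed v hv w hw
end

section
/- For a connected graph G on n ≥ 3 vertices, γ₃(G) + κ(G) = 2n − 2 if and only if G is isomorphic to K₄, C₄, or K_{1,2} (the path on 3 vertices). -/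
/-- Vertex connectivity: minimum number of vertices whose removal
results in a disconnected or trivial graph. -/
noncomputable def kappa {V : Type*} [Fintype V] [DecidableEq V] (G : SimpleGraph V) : ℕ :=
  sInf {k | ∃ S : Finset V, S.card = k ∧
    (((Sᶜ : Finset V)).card ≤ 1 ∨ ¬ (G.induce (↑(Sᶜ : Finset V) : Set V)).Connected)}

/-! Since γ₃(G) ≤ n and κ(G) ≤ n − 1, the sum 2n − 2 forces either κ = γ₃ = n − 1 or
κ = n − 2, γ₃ = n. If κ = n − 1 then G is complete, where any three vertices 3-dominate,
so n − 1 = γ₃ = 3. If γ₃ = n then no vertex has degree ≥ 3 (such a vertex could be left out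
of a 3-dominating set), so n − 2 = κ ≤ δ ≤ 2: G is a connected non-complete graph on 3
vertices, i.e. P₃, or a 2-regular graph on 4 vertices, i.e. C₄. -/

open SimpleGraph Finset

section Gamma3

variable {V : Type*} [Fintype V] {G : SimpleGraph V}

lemma gamma3_le_card {S : Finset V} (hS : ThreeDominating G S) : gamma3 G ≤ #S :=
  Nat.sInf_le ⟨S, hS, rfl⟩

lemma exists_threeDominating_card_eq_gamma3 :
    ∃ S : Finset V, ThreeDominating G S ∧ #S = gamma3 G :=
  Nat.sInf_mem (s := {k | ∃ S : Finset V, ThreeDominating G S ∧ #S = k})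
    ⟨_, univ, fun v hv => absurd (mem_univ v) hv, rfl⟩

lemma gamma3_le_card_univ : gamma3 G ≤ Fintype.card V :=
  gamma3_le_card (S := univ) fun v hv => absurd (mem_univ v) hv

lemma three_le_gamma3 (hn : 3 ≤ Fintype.card V) : 3 ≤ gamma3 G := by
  obtain ⟨S, hS, hcard⟩ := exists_threeDominating_card_eq_gamma3 (G := G)
  rw [← hcard]
  by_contra! hlt
  obtain ⟨v, -, hv⟩ :=
    exists_mem_notMem_of_card_lt_card (s := S) (t := univ) (by rw [card_univ]; omega)
  have := (hS v hv).trans (Set.ncard_le_ncard fun u hu => hu.1 : _ ≤ (S : Set V).ncard)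
  rw [Set.ncard_coe_finset] at this
  omega

lemma ncard_adj_mem_le_degree [DecidableRel G.Adj] (S : Finset V) (v : V) :
    {u | u ∈ S ∧ G.Adj v u}.ncard ≤ G.degree v := by
  rw [← card_neighborFinset_eq_degree, ← Set.ncard_coe_finset]
  exact Set.ncard_le_ncard fun u hu => by simpa using hu.2

lemma gamma3_lt_card_of_three_le_degree [DecidableRel G.Adj] [DecidableEq V] {v : V}
    (hv : 3 ≤ G.degree v) : gamma3 G < Fintype.card V := by
  have hdom : ThreeDominating G (univ.erase v) := by
    intro w hw
    obtain rfl : w = v := by simpa using hw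
    have : {u | u ∈ univ.erase w ∧ G.Adj w u} = G.neighborFinset w := by
      ext u
      simpa using fun h : G.Adj w u => G.ne_of_adj h |>.symm
    rwa [this, Set.ncard_coe_finset, card_neighborFinset_eq_degree]
  have := gamma3_le_card hdom
  rw [card_erase_of_mem (mem_univ v), card_univ] at this
  have : 0 < Fintype.card V := Fintype.card_pos_iff.mpr ⟨v⟩
  omega

lemma gamma3_eq_card_iff [DecidableRel G.Adj] [DecidableEq V] :
    gamma3 G = Fintype.card V ↔ ∀ v, G.degree v ≤ 2 := by
  refine ⟨fun h v => ?_, fun h => ?_⟩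
  · by_contra! hv
    exact (gamma3_lt_card_of_three_le_degree hv).ne h
  · obtain ⟨S, hS, hcard⟩ := exists_threeDominating_card_eq_gamma3 (G := G)
    have : S = univ := eq_univ_of_forall fun v => by
      by_contra hv
      have := (hS v hv).trans (ncard_adj_mem_le_degree S v)
      have := h v
      omega
    rw [← hcard, this, card_univ]

lemma gamma3_top (hn : 3 ≤ Fintype.card V) : gamma3 (⊤ : SimpleGraph V) = 3 := by
  refine le_antisymm ?_ (three_le_gamma3 hn)
  obtain ⟨S, -, hS⟩ := exists_subset_card_eq (s := (univ : Finset V)) (by simpa using hn)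
  refine hS ▸ gamma3_le_card fun v hv => ?_
  have : {u | u ∈ S ∧ (⊤ : SimpleGraph V).Adj v u} = S := by
    ext u
    simpa using fun hu (h : v = u) => hv (h ▸ hu)
  rw [this, Set.ncard_coe_finset, hS]

end Gamma3

section Kappa

variable {V : Type*} {G : SimpleGraph V}

lemma not_connected_induce_of_forall_not_adj {s : Set V} {u w : V} (hu : u ∈ s) (hw : w ∈ s)
    (huw : u ≠ w) (h : ∀ z ∈ s, ¬ G.Adj u z) : ¬ (G.induce s).Connected := fun hconn => by
  obtain ⟨z, hz⟩ := (hconn.preconnected ⟨u, hu⟩ ⟨w, hw⟩).nonempty_neighborSet_left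
    (by simpa using huw)
  exact h z z.2 hz

variable [Fintype V] [DecidableEq V]

lemma kappa_le_card {S : Finset V}
    (h : #Sᶜ ≤ 1 ∨ ¬ (G.induce (↑(Sᶜ : Finset V) : Set V)).Connected) : kappa G ≤ #S :=
  Nat.sInf_le ⟨S, rfl, h⟩

lemma exists_card_eq_kappa : ∃ S : Finset V, #S = kappa G ∧
    (#Sᶜ ≤ 1 ∨ ¬ (G.induce (↑(Sᶜ : Finset V) : Set V)).Connected) :=
  Nat.sInf_mem (s := {k | ∃ S : Finset V, #S = k ∧
    (#Sᶜ ≤ 1 ∨ ¬ (G.induce (↑(Sᶜ : Finset V) : Set V)).Connected)})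
    ⟨_, univ, rfl, Or.inl (by simp)⟩

lemma le_kappa {m : ℕ}
    (h : ∀ S : Finset V, #S < m → 2 ≤ #Sᶜ ∧ (G.induce (↑(Sᶜ : Finset V) : Set V)).Preconnected) :
    m ≤ kappa G := by
  by_contra! hlt
  obtain ⟨S, hcard, hS⟩ := exists_card_eq_kappa (G := G)
  obtain ⟨htwo, hpre⟩ := h S (hcard ▸ hlt)
  obtain ⟨v, hv⟩ := card_pos.mp (by omega : 0 < #Sᶜ)
  exact hS.elim (by omega) fun hdis => hdis (connected_iff _ |>.mpr ⟨hpre, ⟨⟨v, hv⟩⟩⟩)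

lemma kappa_le_card_sub_one [Nonempty V] : kappa G ≤ Fintype.card V - 1 := by
  obtain ⟨v⟩ := ‹Nonempty V›
  have := kappa_le_card (G := G) (S := univ.erase v) (Or.inl (by simp))
  rwa [card_erase_of_mem (mem_univ v), card_univ] at this

lemma kappa_le_card_sub_two_of_not_adj {u v : V} (huv : u ≠ v) (h : ¬ G.Adj u v) :
    kappa G ≤ Fintype.card V - 2 := by
  have := kappa_le_card (G := G) (S := {u, v}ᶜ) <| Or.inr <| by
    refine not_connected_induce_of_forall_not_adj (u := u) (w := v) (by simp) (by simp) huv ?_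
    simpa using h
  rwa [card_compl, card_pair huv] at this

lemma kappa_le_degree [DecidableRel G.Adj] (v : V) : kappa G ≤ G.degree v := by
  rw [← card_neighborFinset_eq_degree]
  refine kappa_le_card (or_iff_not_imp_left.mpr fun hlarge => ?_)
  have hv : v ∈ (G.neighborFinset v)ᶜ := by simp
  obtain ⟨w, hw, hwv⟩ := exists_mem_ne (s := (G.neighborFinset v)ᶜ) (by omega) v
  exact not_connected_induce_of_forall_not_adj (mem_coe.mpr hv) (mem_coe.mpr hw) hwv.symm
    fun z hz => by simpa using hz

lemma kappa_top [Nonempty V] : kappa (⊤ : SimpleGraph V) = Fintype.card V - 1 := by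
  refine le_antisymm kappa_le_card_sub_one (le_kappa fun S hS => ⟨?_, ?_⟩)
  · rw [card_compl]; omega
  · rw [← completeGraph_eq_top, induce_top]
    exact preconnected_top

lemma eq_top_of_card_sub_one_le_kappa (h : Fintype.card V - 1 ≤ kappa G) : G = ⊤ := by
  ext u v
  refine ⟨G.ne_of_adj, fun huv => ?_⟩
  by_contra hnadj
  have := kappa_le_card_sub_two_of_not_adj huv hnadj
  have := Fintype.one_lt_card_iff.mpr ⟨u, v, huv⟩
  omega

lemma kappa_pos (hconn : G.Connected) (hn : 2 ≤ Fintype.card V) : 0 < kappa G := by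
  refine le_kappa fun S hS => ?_
  obtain rfl : S = ∅ := card_eq_zero.mp (by omega)
  refine ⟨by simpa using hn, ?_⟩
  rw [compl_empty, coe_univ]
  exact ((induceUnivIso G).connected_iff.mpr hconn).preconnected

end Kappa

section Iso

variable {V W : Type*} {G : SimpleGraph V} {H : SimpleGraph W}

lemma ThreeDominating.map (e : G ≃g H) {S : Finset V} (hS : ThreeDominating G S) :
    ThreeDominating H (S.map e.toEquiv.toEmbedding) := by
  intro w hw
  have hw' : e.symm w ∉ S := fun h => hw (mem_map.mpr ⟨_, h, e.apply_symm_apply w⟩)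
  have : {u | u ∈ S.map e.toEquiv.toEmbedding ∧ H.Adj w u} =
      e '' {u | u ∈ S ∧ G.Adj (e.symm w) u} := by
    ext u
    obtain ⟨x, rfl⟩ := e.surjective u
    have hx : e.toEquiv.symm (e x) = x := e.toEquiv.symm_apply_apply x
    simp [← e.map_adj_iff (v := e.symm w), hx]
  rw [this, Set.ncard_image_of_injective _ e.injective]
  exact hS _ hw'

variable [Fintype V] [Fintype W]

lemma gamma3_le_of_iso (e : G ≃g H) : gamma3 H ≤ gamma3 G := by
  obtain ⟨S, hS, hcard⟩ := exists_threeDominating_card_eq_gamma3 (G := G)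
  simpa [hcard] using gamma3_le_card (hS.map e)

lemma gamma3_congr (e : G ≃g H) : gamma3 G = gamma3 H :=
  le_antisymm (gamma3_le_of_iso e.symm) (gamma3_le_of_iso e)

variable [DecidableEq V] [DecidableEq W]

lemma kappa_le_of_iso (e : G ≃g H) : kappa H ≤ kappa G := by
  obtain ⟨S, hcard, hS⟩ := exists_card_eq_kappa (G := G)
  have hcompl : (↑(S.map e.toEquiv.toEmbedding)ᶜ : Set W) = e '' ↑Sᶜ := by
    simpa using (e.toEquiv.image_compl _).symm
  have hcard_compl : #(S.map e.toEquiv.toEmbedding)ᶜ = #Sᶜ := by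
    simp [card_compl, Fintype.card_congr e.toEquiv]
  refine hcard ▸ card_map e.toEquiv.toEmbedding ▸ kappa_le_card ?_
  rw [hcard_compl, coe_compl, ← coe_compl, hcompl]
  exact hS.imp_right fun hdis hconn =>
    hdis ((e.induce (e.toEquiv.bijOn_image)).connected_iff.mpr hconn)

lemma kappa_congr (e : G ≃g H) : kappa G = kappa H :=
  le_antisymm (kappa_le_of_iso e.symm) (kappa_le_of_iso e)

end Iso

lemma gamma3_cycleGraph_four : gamma3 (cycleGraph 4) = 4 := by
  simpa using gamma3_eq_card_iff.mpr fun v : Fin 4 => (cycleGraph_degree_three_le (v := v)).le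

lemma kappa_cycleGraph_four : kappa (cycleGraph 4) = 2 :=
  le_antisymm (kappa_le_card_sub_two_of_not_adj (u := 0) (v := 2) (by decide) (by decide))
    (le_kappa (by decide))

lemma gamma3_pathGraph_three : gamma3 (pathGraph 3) = 3 :=
  le_antisymm (gamma3_le_card_univ.trans_eq (Fintype.card_fin 3)) (three_le_gamma3 (by simp))

lemma kappa_pathGraph_three : kappa (pathGraph 3) = 1 :=
  le_antisymm (kappa_le_card_sub_two_of_not_adj (u := 0) (v := 2) (by decide)
    (by simp [pathGraph_adj])) (kappa_pos (pathGraph_connected 2) (by simp))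

section Recognition

variable {V : Type*} [Fintype V] {G : SimpleGraph V}

lemma nonempty_iso_of_injective {n : ℕ} {H : SimpleGraph (Fin n)} (f : Fin n → V)
    (hf : Function.Injective f) (hcard : Fintype.card V = n)
    (hadj : ∀ i j, G.Adj (f i) (f j) ↔ H.Adj i j) : Nonempty (G ≃g H) :=
  let e := Equiv.ofBijective f <|
    (Fintype.bijective_iff_injective_and_card f).mpr ⟨hf, by simp [hcard]⟩
  ⟨(⟨e, hadj _ _⟩ : H ≃g G).symm⟩

lemma nonempty_iso_pathGraph_three [DecidableEq V] (hconn : G.Connected)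
    (h3 : Fintype.card V = 3) (htop : G ≠ ⊤) : Nonempty (G ≃g pathGraph 3) := by
  obtain ⟨u, v, huv, hnadj⟩ : ∃ u v, u ≠ v ∧ ¬ G.Adj u v := by
    by_contra! h
    exact htop (by ext u v; exact ⟨G.ne_of_adj, h u v⟩)
  obtain ⟨w, huw⟩ : ∃ w, G.Adj u w := (hconn.preconnected u v).nonempty_neighborSet_left huv
  have huw' : u ≠ w := G.ne_of_adj huw
  have hwv : w ≠ v := fun h => hnadj (h ▸ huw)
  have huniv : ({u, w, v} : Finset V) = univ :=
    eq_univ_of_card _ (h3 ▸ card_eq_three.mpr ⟨u, w, v, huw', huv, hwv, rfl⟩)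
  obtain ⟨z, hvz⟩ : ∃ z, G.Adj v z := (hconn.preconnected v u).nonempty_neighborSet_left huv.symm
  have hvw : G.Adj v w := by
    have : z ∈ ({u, w, v} : Finset V) := huniv ▸ mem_univ z
    simp only [mem_insert, mem_singleton] at this
    rcases this with rfl | rfl | rfl
    · exact absurd hvz.symm hnadj
    · exact hvz
    · exact absurd hvz (G.irrefl)
  refine nonempty_iso_of_injective ![u, w, v] ?_ h3 fun i j => ?_
  · intro i j
    fin_cases i <;> fin_cases j <;> simp [huw', huv, hwv, huw'.symm, huv.symm, hwv.symm]
  · fin_cases i <;> fin_cases j <;>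
      simp [pathGraph_adj, huw, hvw, huw.symm, hvw.symm, hnadj, mt G.adj_symm hnadj]

lemma exists_ne_not_adj_of_degree_lt [DecidableRel G.Adj] [DecidableEq V] {v : V}
    (h : G.degree v + 1 < Fintype.card V) : ∃ w, w ≠ v ∧ ¬ G.Adj v w := by
  by_contra! hall
  have := card_le_card (s := univ.erase v) fun w hw =>
    (mem_neighborFinset G v w).mpr (hall w (ne_of_mem_erase hw))
  rw [card_erase_of_mem (mem_univ v), card_univ, card_neighborFinset_eq_degree] at this
  omega

lemma neighborFinset_eq_compl_pair [DecidableRel G.Adj] [DecidableEq V] {u v : V} (huv : u ≠ v)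
    (hnadj : ¬ G.Adj u v) (hdeg : G.degree u + 2 = Fintype.card V) :
    G.neighborFinset u = {u, v}ᶜ := by
  refine eq_of_subset_of_card_le (fun z hz => ?_) ?_
  · have hz : G.Adj u z := (mem_neighborFinset G u z).mp hz
    simpa using ⟨(G.ne_of_adj hz).symm, fun h => hnadj (h ▸ hz)⟩
  · rw [card_compl, card_pair huv, card_neighborFinset_eq_degree]
    omega

lemma nonempty_iso_cycleGraph_four [DecidableRel G.Adj] [DecidableEq V]
    (h4 : Fintype.card V = 4) (hdeg : ∀ v, G.degree v = 2) : Nonempty (G ≃g cycleGraph 4) := by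
  obtain ⟨a⟩ : Nonempty V := Fintype.card_pos_iff.mp (by omega)
  obtain ⟨c, hca, hac⟩ := exists_ne_not_adj_of_degree_lt (G := G) (v := a) (by rw [hdeg]; omega)
  have hNa := neighborFinset_eq_compl_pair hca.symm hac (by rw [hdeg]; omega)
  have hNc := neighborFinset_eq_compl_pair hca (fun h => hac h.symm) (by rw [hdeg]; omega)
  rw [pair_comm] at hNc
  obtain ⟨b, d, hbd, hbd_eq⟩ := (card_eq_two (s := ({a, c}ᶜ : Finset V))).mp
    (by rw [card_compl, card_pair hca.symm, h4])
  have hab : G.Adj a b := by simp [← mem_neighborFinset, hNa, hbd_eq]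
  have had : G.Adj a d := by simp [← mem_neighborFinset, hNa, hbd_eq]
  have hcb : G.Adj c b := by simp [← mem_neighborFinset, hNc, hbd_eq]
  have hcd : G.Adj c d := by simp [← mem_neighborFinset, hNc, hbd_eq]
  have hnbd : ¬ G.Adj b d := by
    obtain ⟨w, hwb, hbw⟩ := exists_ne_not_adj_of_degree_lt (G := G) (v := b) (by rw [hdeg]; omega)
    have : w ∈ ({a, c}ᶜ : Finset V) := by
      simpa using ⟨fun h => hbw (h ▸ hab.symm), fun h => hbw (h ▸ hcb.symm)⟩
    rw [hbd_eq, mem_insert, mem_singleton] at this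
    exact this.resolve_left hwb ▸ hbw
  refine nonempty_iso_of_injective ![a, b, c, d] ?_ h4 fun i j => ?_
  · have hab' := G.ne_of_adj hab
    have had' := G.ne_of_adj had
    have hcb' := G.ne_of_adj hcb
    have hcd' := G.ne_of_adj hcd
    intro i j
    fin_cases i <;> fin_cases j <;>
      simp [hab', had', hcb', hcd', hca, hbd, hab'.symm, had'.symm, hcb'.symm, hcd'.symm,
        hca.symm, hbd.symm]
  · fin_cases i <;> fin_cases j <;>
      simp [cycleGraph_adj, hab, had, hcb, hcd, hab.symm, had.symm, hcb.symm, hcd.symm, hac, hnbd,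
        mt G.adj_symm hac,
        mt G.adj_symm hnbd] <;> decide

end Recognition

theorem stmt_13 {V : Type*} [Fintype V] [DecidableEq V] (G : SimpleGraph V)
    (hconn : G.Connected) (hn : 3 ≤ Fintype.card V) :
    gamma3 G + kappa G = 2 * Fintype.card V - 2 ↔
      (Nonempty (G ≃g (⊤ : SimpleGraph (Fin 4))) ∨
       Nonempty (G ≃g SimpleGraph.cycleGraph 4) ∨
       Nonempty (G ≃g SimpleGraph.pathGraph 3)) := by
  classical
  constructor
  · intro hsum
    have hγ := gamma3_le_card_univ (G := G)
    have : Nonempty V := Fintype.card_pos_iff.mp (by omega)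
    have hκ := kappa_le_card_sub_one (G := G)
    by_cases hdeg : ∀ v, G.degree v ≤ 2
    · have hγ_eq := gamma3_eq_card_iff.mpr hdeg
      obtain ⟨v⟩ := ‹Nonempty V›
      have hκ_two := (kappa_le_degree (G := G) v).trans (hdeg v)
      obtain h3 | h4 : Fintype.card V = 3 ∨ Fintype.card V = 4 := by omega
      · refine Or.inr <| Or.inr <| nonempty_iso_pathGraph_three hconn h3 fun htop => ?_
        have := kappa_top (V := V)
        rw [← htop] at this
        omega
      · refine Or.inr <| Or.inl <| nonempty_iso_cycleGraph_four h4 fun w => ?_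
        have := kappa_le_degree (G := G) w
        have := hdeg w
        omega
    · obtain ⟨w, hw⟩ := not_forall.mp hdeg
      have hγ_lt := gamma3_lt_card_of_three_le_degree (not_le.mp hw)
      obtain rfl := eq_top_of_card_sub_one_le_kappa (G := G) (by omega)
      have hγ_top := gamma3_top (V := V) hn
      exact Or.inl ⟨Iso.completeGraph (Fintype.equivFinOfCardEq (by omega))⟩
  · rintro (⟨⟨e⟩⟩ | ⟨⟨e⟩⟩ | ⟨⟨e⟩⟩) <;>
      rw [gamma3_congr e, kappa_congr e, Fintype.card_congr e.toEquiv]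
    · rw [gamma3_top (by simp), kappa_top]; simp
    · rw [gamma3_cycleGraph_four, kappa_cycleGraph_four]; simp
    · rw [gamma3_pathGraph_three, kappa_pathGraph_three]; simp
end
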